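/- For an integer n ≥ 1 and r ∈ [0,1], define the worst-case regret of the second-price auction with deterministic reserve r as W_n(r) := sup over all Borel probability measures F on [0,1] of ∫_{[0,1]^n} ( v^{(1)} − max(v^{(2)}, r)·1{v^{(1)} ≥ r} ) dF^{⊗n}(v). Then: for n = 1, W_1(r) = max(1−r, r); and for n ≥ 2, W_n(r) = (1−r)^n (n−1)^{n−1} / ((1−r)n − r)^{n−1} if r ≤ 1/2, and W_n(r) = r if r ≥ 1/2. -/

import Mathlib

/-!
At a value profile `v` the realized regret is the length of the interval `[revenue, v⁽¹⁾)`, so by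
Tonelli the expected regret is `∫ P(revenue ≤ t < v⁽¹⁾) dt`. For `t < r` the event forces every
value below `r` (probability `a^n`, `a = F(<r)`); for `t ≥ r` it forces exactly one value above `t`
(probability at most `n (1-s) s^(n-1)`, `s = F(≤t) ≥ a`). Both pieces are controlled by the
polynomial `r s^n + (1-r) n s^(n-1) (1-s)`, whose maximum on `[0,1]` is the claimed value by
Bernoulli's inequality. The bound is approached by putting mass `p` at `1` and the rest just below
`r`; with `p ∈ {0, 1}` the same distributions attain the trivial pointwise bound `max (1-r) r`.
-/

open MeasureTheory Real Set ENNReal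

noncomputable section

/-- Largest coordinate of `v`. -/
def top1 {n : ℕ} (v : Fin n → ℝ) : ℝ := ⨆ i, v i

/-- Second-largest coordinate of `v` (junk value `0` when `n = 1`). -/
def top2 {n : ℕ} (v : Fin n → ℝ) : ℝ := ⨅ i, ⨆ j ∈ ({i}ᶜ : Set (Fin n)), v j

/-- Regret of the second-price auction with random reserve `μ` against value distribution `G`. -/
def spaRegret (n : ℕ) (μ : Measure ℝ) (G : Measure (Fin n → ℝ)) : ℝ :=
  ∫ v in Set.Icc (0 : Fin n → ℝ) 1,
    (top1 v - ∫ p in Set.Icc (0:ℝ) 1, (if p ≤ top1 v then max (top2 v) p else 0) ∂μ) ∂G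

def gfun (n : ℕ) (r : ℝ) : ℝ :=
  (1 - r) ^ (n - 1) + Real.log r + ∑ k ∈ Finset.Icc 1 (n-1), (1 - r) ^ k / (k : ℝ)

def Phi (n : ℕ) (rs : ℝ) (v : ℝ) : ℝ :=
  if v ≤ rs then 0
  else (v / (v - rs)) ^ (n - 1) * Real.log (v / rs)
       - ∑ k ∈ Finset.Icc 1 (n-1), (1 / (k:ℝ)) * (v / (v - rs)) ^ (n - 1 - k)

def PhiExt (n : ℕ) (rs : ℝ) (v : ℝ) : ℝ := if v ≤ 1 then Phi n rs v else 1

def isoCDF (r : ℝ) (v : ℝ) : ℝ := if v < r then 0 else if v < 1 then 1 - r / v else 1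

/-- Regret of a direct mechanism with payment rule `p` against value distribution `G`. -/
def mechRegret (n : ℕ) (p : (Fin n → ℝ) → Fin n → ℝ) (G : Measure (Fin n → ℝ)) : ℝ :=
  ∫ v in Set.Icc (0 : Fin n → ℝ) 1, (top1 v - ∑ i, p v i) ∂G

/-- Dominant-strategy incentive compatible mechanism for `n` buyers with values in `[0,1]`. -/
def DSIC (n : ℕ) (x p : (Fin n → ℝ) → Fin n → ℝ) : Prop :=
  Measurable x ∧ Measurable p ∧ (∃ C, ∀ v i, |p v i| ≤ C) ∧
  ∀ v ∈ Set.Icc (0 : Fin n → ℝ) 1, (∑ j, x v j) ≤ 1 ∧ ∀ i,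
    0 ≤ x v i ∧ 0 ≤ v i * x v i - p v i ∧
    ∀ w ∈ Set.Icc (0:ℝ) 1,
      v i * x (Function.update v i w) i - p (Function.update v i w) i ≤ v i * x v i - p v i

def Exchangeable (n : ℕ) (μ : Measure (Fin n → ℝ)) : Prop :=
  ∀ σ : Equiv.Perm (Fin n), Measure.map (fun v i => v (σ i)) μ = μ

def Affiliated (n : ℕ) (μ : Measure (Fin n → ℝ)) : Prop :=
  ∃ (lam : Measure ℝ) (f : (Fin n → ℝ) → ℝ≥0∞), Measurable f ∧
    μ = (Measure.pi fun _ : Fin n => lam).withDensity f ∧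
    ∀ᵐ q ∂((Measure.pi fun _ : Fin n => lam).prod (Measure.pi fun _ : Fin n => lam)),
      f q.1 * f q.2 ≤ f (q.1 ⊓ q.2) * f (q.1 ⊔ q.2)

def worstCase (n : ℕ) (p : (Fin n → ℝ) → Fin n → ℝ) (C : Set (Measure (Fin n → ℝ))) : ℝ :=
  sSup {w | ∃ G ∈ C, w = mechRegret n p G}

def minimaxRegret (n : ℕ) (C : Set (Measure (Fin n → ℝ))) : ℝ :=
  sInf {w | ∃ x p, DSIC n x p ∧ w = worstCase n p C}

def iidClass (n : ℕ) : Set (Measure (Fin n → ℝ)) :=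
  {G | ∃ F : Measure ℝ, IsProbabilityMeasure F ∧ F (Set.Icc 0 1) = 1 ∧
        G = Measure.pi fun _ => F}

def affClass (n : ℕ) : Set (Measure (Fin n → ℝ)) :=
  {G | IsProbabilityMeasure G ∧ G (Set.Icc 0 1) = 1 ∧ Exchangeable n G ∧ Affiliated n G}

def exchClass (n : ℕ) : Set (Measure (Fin n → ℝ)) :=
  {G | IsProbabilityMeasure G ∧ G (Set.Icc 0 1) = 1 ∧ Exchangeable n G}

def allClass (n : ℕ) : Set (Measure (Fin n → ℝ)) :=
  {G | IsProbabilityMeasure G ∧ G (Set.Icc 0 1) = 1}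


/-- Worst-case regret of the second-price auction with deterministic reserve `r`
against i.i.d. value distributions on `[0,1]`. -/
def Wfun (n : ℕ) (r : ℝ) : ℝ :=
  sSup {w | ∃ F : Measure ℝ, IsProbabilityMeasure F ∧ F (Set.Icc 0 1) = 1 ∧
    w = ∫ v in Set.Icc (0 : Fin n → ℝ) 1,
          (top1 v - if r ≤ top1 v then max (top2 v) r else 0)
        ∂(Measure.pi fun _ : Fin n => F)}

section OrderStatistics

variable {n : ℕ}

lemma le_top1 (v : Fin n → ℝ) (i : Fin n) : v i ≤ top1 v :=
  le_ciSup (Set.finite_range v).bddAbove i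

lemma top1_le_iff [NeZero n] {v : Fin n → ℝ} {c : ℝ} : top1 v ≤ c ↔ ∀ i, v i ≤ c :=
  ciSup_le_iff (Set.finite_range v).bddAbove

lemma lt_top1_iff [NeZero n] {v : Fin n → ℝ} {t : ℝ} : t < top1 v ↔ ∃ i, t < v i :=
  lt_ciSup_iff (Set.finite_range v).bddAbove

lemma top1_const [NeZero n] (a : ℝ) : top1 (fun _ : Fin n => a) = a := ciSup_const

lemma le_biSup_compl (v : Fin n → ℝ) {i j : Fin n} (hj : j ≠ i) :
    v j ≤ ⨆ k ∈ ({i}ᶜ : Set (Fin n)), v k := by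
  refine le_ciSup_of_le (Set.finite_range _).bddAbove j ?_
  rw [ciSup_pos (by simpa using hj)]

lemma top2_le_of_forall_ne {v : Fin n → ℝ} {t : ℝ} (ht : 0 ≤ t) (i : Fin n)
    (h : ∀ j, j ≠ i → v j ≤ t) : top2 v ≤ t :=
  (ciInf_le (Set.finite_range _).bddBelow i).trans <|
    Real.iSup_le (fun j => Real.iSup_le (fun hj => h j (by simpa using hj)) ht) ht

lemma exists_forall_ne_le_of_top2_le [NeZero n] {v : Fin n → ℝ} {t : ℝ} (h : top2 v ≤ t) :
    ∃ i, ∀ j, j ≠ i → v j ≤ t := by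
  obtain ⟨i, hi⟩ :=
    exists_eq_ciInf_of_finite (f := fun i => ⨆ k ∈ ({i}ᶜ : Set (Fin n)), v k)
  exact ⟨i, fun j hj => (le_biSup_compl v hj).trans (hi.trans_le h)⟩

lemma top2_le_top1 [NeZero n] {v : Fin n → ℝ} (hv : 0 ≤ top1 v) : top2 v ≤ top1 v :=
  top2_le_of_forall_ne hv 0 fun j _ => le_top1 v j

lemma measurable_top1 : Measurable (top1 : (Fin n → ℝ) → ℝ) :=
  Measurable.iSup fun i => measurable_pi_apply i

lemma measurable_top2 : Measurable (top2 : (Fin n → ℝ) → ℝ) :=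
  Measurable.iInf fun _ => Measurable.iSup fun j => Measurable.iSup_Prop _ (measurable_pi_apply j)

end OrderStatistics

section Revenue

variable {n : ℕ} {r : ℝ}

def spaRevenue (r : ℝ) (v : Fin n → ℝ) : ℝ := if r ≤ top1 v then max (top2 v) r else 0

def regret (n : ℕ) (r : ℝ) (F : Measure ℝ) : ℝ :=
  ∫ v in Icc (0 : Fin n → ℝ) 1, (top1 v - spaRevenue r v) ∂(Measure.pi fun _ => F)

lemma Wfun_eq_sSup_regret (n : ℕ) (r : ℝ) :
    Wfun n r = sSup {w | ∃ F : Measure ℝ, IsProbabilityMeasure F ∧ F (Icc 0 1) = 1 ∧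
      w = regret n r F} := rfl

lemma measurable_spaRevenue (r : ℝ) : Measurable (spaRevenue (n := n) r) :=
  Measurable.ite (measurableSet_le measurable_const measurable_top1)
    (measurable_top2.max measurable_const) measurable_const

lemma spaRevenue_nonneg (hr : 0 ≤ r) (v : Fin n → ℝ) : 0 ≤ spaRevenue r v := by
  unfold spaRevenue
  split_ifs
  exacts [hr.trans (le_max_right _ _), le_rfl]

lemma spaRevenue_le_top1 [NeZero n] {v : Fin n → ℝ} (hv : 0 ≤ top1 v) :
    spaRevenue r v ≤ top1 v := by
  unfold spaRevenue
  split_ifs with h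
  exacts [max_le (top2_le_top1 hv) h, hv]

lemma top1_sub_spaRevenue_le {v : Fin n → ℝ} (hv : top1 v ≤ 1) :
    top1 v - spaRevenue r v ≤ max (1 - r) r := by
  unfold spaRevenue
  split_ifs with h
  · linarith [le_max_right (top2 v) r, le_max_left (1 - r) r]
  · linarith [le_max_right (1 - r) r]

lemma top1_mem_Icc [NeZero n] {v : Fin n → ℝ} (hv : v ∈ Icc 0 1) : top1 v ∈ Icc 0 1 :=
  ⟨(hv.1 0).trans (le_top1 v 0), top1_le_iff.2 hv.2⟩

lemma integrableOn_top1_sub_spaRevenue [NeZero n] (G : Measure (Fin n → ℝ))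
    [IsFiniteMeasure G] : IntegrableOn (fun v => top1 v - spaRevenue r v) (Icc 0 1) G := by
  refine Integrable.of_bound
    (measurable_top1.sub (measurable_spaRevenue r)).aestronglyMeasurable (max (1 - r) r) ?_
  filter_upwards [ae_restrict_mem measurableSet_Icc] with v hv
  have h := top1_mem_Icc hv
  rw [Real.norm_of_nonneg (sub_nonneg.2 (spaRevenue_le_top1 h.1))]
  exact top1_sub_spaRevenue_le h.2

lemma setIntegral_top1_sub_spaRevenue_le [NeZero n] (G : Measure (Fin n → ℝ))
    [IsProbabilityMeasure G] :
    ∫ v in Icc 0 1, (top1 v - spaRevenue r v) ∂G ≤ max (1 - r) r :=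
  calc ∫ v in Icc 0 1, (top1 v - spaRevenue r v) ∂G
      ≤ ∫ _ in Icc (0 : Fin n → ℝ) 1, max (1 - r) r ∂G :=
        setIntegral_mono_on (integrableOn_top1_sub_spaRevenue G) (integrableOn_const)
          measurableSet_Icc fun v hv => top1_sub_spaRevenue_le (top1_mem_Icc hv).2
    _ = max (1 - r) r * G.real (Icc 0 1) := by rw [setIntegral_const, smul_eq_mul, mul_comm]
    _ ≤ max (1 - r) r := mul_le_of_le_one_right
        (le_max_iff.2 (by by_contra! h; linarith [h.1, h.2])) measureReal_le_one

end Revenue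

lemma pow_mul_le_one (m : ℕ) {x : ℝ} (hx : 0 ≤ x) : x ^ m * (m + 1 - m * x) ≤ 1 := by
  rcases hx.eq_or_lt with rfl | hx
  · rcases m with _ | m <;> simp
  have hb := one_add_mul_le_pow (a := x⁻¹ - 1) (by linarith [inv_pos.2 hx]) (m + 1)
  calc x ^ m * (m + 1 - m * x) = x ^ (m + 1) * (1 + ((m + 1 : ℕ) : ℝ) * (x⁻¹ - 1)) := by
        push_cast; field_simp; ring
    _ ≤ x ^ (m + 1) * (1 + (x⁻¹ - 1)) ^ (m + 1) := by gcongr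
    _ = 1 := by rw [add_sub_cancel, ← mul_pow, mul_inv_cancel₀ hx.ne', one_pow]

/-- The regret under i.i.d. values with mass `p` at `1` and `1 - p` at a point `a ↑ r`: a loss of
`r` when no value is `1`, and of `1 - r` when exactly one is. -/
def twoPointRegret (n : ℕ) (r p : ℝ) : ℝ :=
  r * (1 - p) ^ n + (1 - r) * (n * p * (1 - p) ^ (n - 1))

def reserveBound (n : ℕ) (r : ℝ) : ℝ :=
  (1 - r) ^ n * ((n : ℝ) - 1) ^ (n - 1) / ((1 - r) * n - r) ^ (n - 1)

section TwoPointRegret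

variable {n : ℕ} {r : ℝ}

lemma twoPointRegret_le (hn : 2 ≤ n) (hD : 0 < (1 - r) * n - r) {p : ℝ} (hp : p ≤ 1) :
    twoPointRegret n r p ≤ reserveBound n r := by
  obtain ⟨k, rfl⟩ : ∃ k, n = k + 1 := ⟨n - 1, by omega⟩
  have hk : (0 : ℝ) < k := by exact_mod_cast (by omega : 0 < k)
  unfold twoPointRegret reserveBound
  simp only [Nat.add_sub_cancel]
  push_cast at hD ⊢
  have hc : 0 < 1 - r := by nlinarith
  -- scaled so that `x = 1` exactly at the maximiser `p = (1 - 2r) / ((1 - r) n - r)`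
  have key := pow_mul_le_one k (x := ((1 - r) * (k + 1) - r) * (1 - p) / (k * (1 - r)))
    (by have := sub_nonneg.2 hp; positivity)
  have e : (((1 - r) * (k + 1) - r) * (1 - p) / (k * (1 - r))) ^ k
        * (k + 1 - k * (((1 - r) * (k + 1) - r) * (1 - p) / (k * (1 - r))))
      = (r * (1 - p) ^ (k + 1) + (1 - r) * ((k + 1) * p * (1 - p) ^ k))
        * ((1 - r) * (k + 1) - r) ^ k / (k ^ k * (1 - r) ^ (k + 1)) := by
    rw [div_pow, mul_pow, mul_pow]
    field_simp
    ring
  rw [e, div_le_one (by positivity)] at key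
  rw [add_sub_cancel_right, le_div_iff₀ (pow_pos hD k)]
  linarith

lemma twoPointRegret_optimal (hn : 1 ≤ n) (hD : (1 - r) * n - r ≠ 0) :
    twoPointRegret n r ((1 - 2 * r) / ((1 - r) * n - r)) = reserveBound n r := by
  obtain ⟨k, rfl⟩ : ∃ k, n = k + 1 := ⟨n - 1, by omega⟩
  unfold twoPointRegret reserveBound
  simp only [Nat.add_sub_cancel]
  push_cast at hD ⊢
  have h1p : 1 - (1 - 2 * r) / ((1 - r) * (k + 1) - r)
      = k * (1 - r) / ((1 - r) * (k + 1) - r) := by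
    field_simp
    ring
  rw [h1p, pow_succ, div_pow, mul_pow]
  field_simp
  ring

lemma one_sub_mul_le_reserveBound_sub (hn : 2 ≤ n) (hr : 0 ≤ r) (hD : 0 < (1 - r) * n - r)
    {a s : ℝ} (ha : 0 ≤ a) (has : a ≤ s) :
    (1 - r) * (n * (1 - s) * s ^ (n - 1)) ≤ reserveBound n r - r * a ^ n := by
  have h := twoPointRegret_le hn hD (p := 1 - s) (by linarith)
  rw [twoPointRegret, _root_.sub_sub_cancel] at h
  have : r * a ^ n ≤ r * s ^ n := by gcongr
  linarith

end TwoPointRegret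

theorem lintegral_ofReal_sub_eq_lintegral_measure {α : Type*} [MeasurableSpace α]
    (μ : Measure α) [SFinite μ] {f g : α → ℝ} (hf : Measurable f) (hg : Measurable g) :
    ∫⁻ x, ENNReal.ofReal (g x - f x) ∂μ = ∫⁻ t, μ {x | f x ≤ t ∧ t < g x} := by
  have hB : MeasurableSet {q : α × ℝ | f q.1 ≤ q.2 ∧ q.2 < g q.1} :=
    (measurableSet_le (hf.comp measurable_fst) measurable_snd).inter
      (measurableSet_lt measurable_snd (hg.comp measurable_fst))
  calc ∫⁻ x, ENNReal.ofReal (g x - f x) ∂μ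
      = ∫⁻ x, volume (Prod.mk x ⁻¹' {q : α × ℝ | f q.1 ≤ q.2 ∧ q.2 < g q.1}) ∂μ :=
        lintegral_congr fun x => (Real.volume_Ico (a := f x) (b := g x)).symm
    _ = (μ.prod volume) {q : α × ℝ | f q.1 ≤ q.2 ∧ q.2 < g q.1} :=
        (Measure.prod_apply hB).symm
    _ = ∫⁻ t, μ {x | f x ≤ t ∧ t < g x} := Measure.prod_apply_symm hB

lemma pi_univ_ite {ι α : Type*} [Fintype ι] [DecidableEq ι] [MeasurableSpace α]
    (F : Measure α) [SigmaFinite F] (i : ι) (S T : Set α) :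
    Measure.pi (fun _ : ι => F) (univ.pi fun j => if j = i then S else T)
      = F S * F T ^ (Fintype.card ι - 1) := by
  rw [Measure.pi_pi, ← Finset.mul_prod_erase _ _ (Finset.mem_univ i), if_pos rfl,
    Finset.prod_congr rfl fun j hj => by rw [if_neg (Finset.ne_of_mem_erase hj)],
    Finset.prod_const, Finset.card_erase_of_mem (Finset.mem_univ i), Finset.card_univ]

section Events

variable {n : ℕ} {r t : ℝ}

lemma subset_pi_Iio_of_lt (ht : t < r) :
    {v : Fin n → ℝ | spaRevenue r v ≤ t ∧ t < top1 v} ⊆ univ.pi fun _ => Iio r := by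
  rintro v ⟨hrev, htop⟩ i -
  have hno : ¬ r ≤ top1 v := fun h => by
    rw [spaRevenue, if_pos h] at hrev
    linarith [le_max_right (top2 v) r]
  exact (le_top1 v i).trans_lt (not_le.1 hno)

lemma subset_iUnion_pi_of_le [NeZero n] (ht : r ≤ t) :
    {v : Fin n → ℝ | spaRevenue r v ≤ t ∧ t < top1 v}
      ⊆ ⋃ i, univ.pi fun j => if j = i then Ioi t else Iic t := by
  rintro v ⟨hrev, htop⟩
  rw [spaRevenue, if_pos (ht.trans htop.le)] at hrev
  obtain ⟨i, hi⟩ := exists_forall_ne_le_of_top2_le ((le_max_left _ _).trans hrev)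
  obtain ⟨i', hi'⟩ := lt_top1_iff.1 htop
  obtain rfl : i' = i := by_contra fun h => not_lt.2 (hi i' h) hi'
  refine mem_iUnion.2 ⟨i', fun j _ => ?_⟩
  by_cases hj : j = i'
  · simpa [hj] using hi'
  · simpa [hj] using hi j hj

lemma inter_Icc_eq_empty_of_notMem [NeZero n] (hr : 0 ≤ r) (ht : t ∉ Ico 0 1) :
    {v : Fin n → ℝ | spaRevenue r v ≤ t ∧ t < top1 v} ∩ Icc 0 1 = ∅ := by
  refine eq_empty_of_forall_notMem fun v ⟨⟨hrev, htop⟩, hv⟩ => ht ⟨?_, ?_⟩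
  · exact (spaRevenue_nonneg hr v).trans hrev
  · exact htop.trans_le (top1_mem_Icc hv).2

end Events

section UpperBound

variable {n : ℕ} {r t : ℝ}

lemma pi_measure_event_le_of_lt (F : Measure ℝ) [IsFiniteMeasure F] (ht : t < r) :
    Measure.pi (fun _ : Fin n => F) {v | spaRevenue r v ≤ t ∧ t < top1 v}
      ≤ ENNReal.ofReal (F.real (Iio r) ^ n) :=
  calc _ ≤ Measure.pi (fun _ : Fin n => F) (univ.pi fun _ => Iio r) :=
        measure_mono (subset_pi_Iio_of_lt ht)
    _ = ENNReal.ofReal (F.real (Iio r) ^ n) := by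
        rw [Measure.pi_pi, Finset.prod_const, Finset.card_univ, Fintype.card_fin,
          ENNReal.ofReal_pow measureReal_nonneg, ofReal_measureReal]

lemma pi_measure_event_le_of_le [NeZero n] (F : Measure ℝ) [IsProbabilityMeasure F]
    (ht : r ≤ t) :
    Measure.pi (fun _ : Fin n => F) {v | spaRevenue r v ≤ t ∧ t < top1 v}
      ≤ ENNReal.ofReal (n * ((1 - F.real (Iic t)) * F.real (Iic t) ^ (n - 1))) := by
  have hIoi : F (Ioi t) = ENNReal.ofReal (1 - F.real (Iic t)) := by
    rw [← compl_Iic, ← probReal_compl_eq_one_sub measurableSet_Iic, ofReal_measureReal]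
  calc _ ≤ Measure.pi (fun _ : Fin n => F)
          (⋃ i, univ.pi fun j => if j = i then Ioi t else Iic t) :=
        measure_mono (subset_iUnion_pi_of_le ht)
    _ ≤ ∑ i, Measure.pi (fun _ : Fin n => F)
          (univ.pi fun j => if j = i then Ioi t else Iic t) :=
        measure_iUnion_fintype_le _ _
    _ = n * (F (Ioi t) * F (Iic t) ^ (n - 1)) := by
        rw [Finset.sum_congr rfl fun i _ => pi_univ_ite F i _ _]
        simp only [Finset.sum_const, Finset.card_univ, Fintype.card_fin, nsmul_eq_mul]
    _ = _ := by
        rw [hIoi, ← ofReal_measureReal (s := Iic t), ← ENNReal.ofReal_pow measureReal_nonneg,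
          ← ENNReal.ofReal_mul (sub_nonneg.2 measureReal_le_one), ← ENNReal.ofReal_natCast,
          ← ENNReal.ofReal_mul (Nat.cast_nonneg n)]

lemma restrict_pi_event_le (F : Measure ℝ) [IsProbabilityMeasure F] (hn : 2 ≤ n) (hr : 0 ≤ r)
    (hD : 0 < (1 - r) * n - r) (t : ℝ) :
    (Measure.pi fun _ : Fin n => F).restrict (Icc 0 1) {v | spaRevenue r v ≤ t ∧ t < top1 v}
      ≤ (Ico 0 r).indicator (fun _ => ENNReal.ofReal (F.real (Iio r) ^ n)) t
        + (Ico r 1).indicator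
          (fun _ => ENNReal.ofReal ((reserveBound n r - r * F.real (Iio r) ^ n) / (1 - r))) t := by
  have : NeZero n := ⟨by omega⟩
  by_cases ht : t ∈ Ico 0 1
  swap
  · rw [Measure.restrict_apply' measurableSet_Icc, inter_Icc_eq_empty_of_notMem hr ht,
      measure_empty]
    exact zero_le
  rcases lt_or_ge t r with htr | htr
  · rw [indicator_of_mem (show t ∈ Ico 0 r from ⟨ht.1, htr⟩),
      indicator_of_notMem fun h => not_le.2 htr h.1, add_zero]
    exact (Measure.restrict_apply_le _ _).trans (pi_measure_event_le_of_lt F htr)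
  · rw [indicator_of_notMem fun h => not_le.2 h.2 htr,
      indicator_of_mem (show t ∈ Ico r 1 from ⟨htr, ht.2⟩), zero_add]
    refine (Measure.restrict_apply_le _ _).trans
      ((pi_measure_event_le_of_le F htr).trans (ENNReal.ofReal_le_ofReal ?_))
    have has : F.real (Iio r) ≤ F.real (Iic t) :=
      measureReal_mono fun x hx => (mem_Iio.1 hx).le.trans htr
    rw [le_div_iff₀ (by nlinarith)]
    linarith [one_sub_mul_le_reserveBound_sub hn hr hD measureReal_nonneg has]

theorem regret_le_reserveBound (F : Measure ℝ) [IsProbabilityMeasure F] (hn : 2 ≤ n)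
    (hr : 0 ≤ r) (hD : 0 < (1 - r) * n - r) : regret n r F ≤ reserveBound n r := by
  have : NeZero n := ⟨by omega⟩
  set μ := (Measure.pi fun _ : Fin n => F).restrict (Icc 0 1)
  set a := F.real (Iio r)
  set M := (reserveBound n r - r * a ^ n) / (1 - r)
  have hc : 0 < 1 - r := by nlinarith
  have ha : 0 ≤ a := measureReal_nonneg
  have hgap : 0 ≤ reserveBound n r - r * a ^ n :=
    le_trans (by have : a ≤ 1 := measureReal_le_one; positivity)
      (one_sub_mul_le_reserveBound_sub hn hr hD ha le_rfl)
  have hM : 0 ≤ M := div_nonneg hgap hc.le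
  have hnonneg : 0 ≤ᵐ[μ] fun v => top1 v - spaRevenue r v := by
    filter_upwards [ae_restrict_mem measurableSet_Icc] with v hv
    exact sub_nonneg.2 (spaRevenue_le_top1 (top1_mem_Icc hv).1)
  rw [regret, integral_eq_lintegral_of_nonneg_ae hnonneg
    (measurable_top1.sub (measurable_spaRevenue r)).aestronglyMeasurable]
  refine ENNReal.toReal_le_of_le_ofReal (by nlinarith [pow_nonneg ha n]) ?_
  calc ∫⁻ v, ENNReal.ofReal (top1 v - spaRevenue r v) ∂μ
      = ∫⁻ t, μ {v | spaRevenue r v ≤ t ∧ t < top1 v} :=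
        lintegral_ofReal_sub_eq_lintegral_measure μ (measurable_spaRevenue r) measurable_top1
    _ ≤ ∫⁻ t, ((Ico 0 r).indicator (fun _ => ENNReal.ofReal (a ^ n)) t
          + (Ico r 1).indicator (fun _ => ENNReal.ofReal M) t) :=
        lintegral_mono (restrict_pi_event_le F hn hr hD)
    _ = ENNReal.ofReal (a ^ n) * ENNReal.ofReal r + ENNReal.ofReal M * ENNReal.ofReal (1 - r) := by
        rw [lintegral_add_left (measurable_const.indicator measurableSet_Ico),
          lintegral_indicator_const measurableSet_Ico, lintegral_indicator_const measurableSet_Ico,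
          Real.volume_Ico, Real.volume_Ico, sub_zero]
    _ = ENNReal.ofReal (reserveBound n r) := by
        rw [← ENNReal.ofReal_mul (by positivity), ← ENNReal.ofReal_mul hM,
          ← ENNReal.ofReal_add (by positivity) (mul_nonneg hM hc.le), div_mul_cancel₀ _ hc.ne']
        ring_nf

end UpperBound

section LowerBound

variable {n : ℕ} {r a p : ℝ}

def twoPoint (p a : ℝ) : Measure ℝ :=
  ENNReal.ofReal p • Measure.dirac 1 + ENNReal.ofReal (1 - p) • Measure.dirac a

lemma twoPoint_apply (s : Set ℝ) :
    twoPoint p a s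
      = ENNReal.ofReal p * s.indicator 1 1 + ENNReal.ofReal (1 - p) * s.indicator 1 a := by
  simp [twoPoint, Measure.dirac_apply]

lemma ofReal_add_ofReal_one_sub (hp : p ∈ Icc 0 1) :
    ENNReal.ofReal p + ENNReal.ofReal (1 - p) = 1 := by
  rw [← ENNReal.ofReal_add hp.1 (sub_nonneg.2 hp.2), add_sub_cancel, ENNReal.ofReal_one]

instance isFiniteMeasure_twoPoint : IsFiniteMeasure (twoPoint p a) :=
  ⟨by simp [twoPoint_apply, ENNReal.add_lt_top]⟩

lemma isProbabilityMeasure_twoPoint (hp : p ∈ Icc 0 1) : IsProbabilityMeasure (twoPoint p a) :=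
  ⟨by simp [twoPoint_apply, ofReal_add_ofReal_one_sub hp]⟩

lemma twoPoint_Icc (hp : p ∈ Icc 0 1) (ha : a ∈ Icc 0 1) : twoPoint p a (Icc 0 1) = 1 := by
  simp [twoPoint_apply, ha, ofReal_add_ofReal_one_sub hp]

lemma twoPoint_singleton_one (ha : a ≠ 1) : twoPoint p a {1} = ENNReal.ofReal p := by
  simp [twoPoint_apply, ha]

lemma twoPoint_singleton (ha : a ≠ 1) : twoPoint p a {a} = ENNReal.ofReal (1 - p) := by
  simp [twoPoint_apply, Ne.symm ha]

lemma top1_sub_spaRevenue_const [NeZero n] (ha : 0 ≤ a) (har : a ≤ r) :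
    top1 (fun _ : Fin n => a) - spaRevenue r (fun _ : Fin n => a)
      = a - if r ≤ a then r else 0 := by
  have htop1 : top1 (fun _ : Fin n => a) = a := top1_const a
  have htop2 : top2 (fun _ : Fin n => a) ≤ r :=
    (top2_le_top1 (htop1.symm ▸ ha)).trans (htop1.trans_le har)
  simp only [spaRevenue, top1_const, max_eq_right htop2]

lemma top1_sub_spaRevenue_of_forall_ne {v : Fin n → ℝ} {i : Fin n} (hr : r ∈ Icc 0 1)
    (har : a ≤ r) (hi : v i = 1) (hv : ∀ j, j ≠ i → v j = a) :
    top1 v - spaRevenue r v = 1 - r := by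
  have : NeZero n := ⟨i.pos.ne'⟩
  have htop1 : top1 v = 1 := le_antisymm
    (top1_le_iff.2 fun j => by
      by_cases hj : j = i
      · rw [hj, hi]
      · rw [hv j hj]; linarith [hr.2])
    (hi ▸ le_top1 v i)
  have htop2 : top2 v ≤ r := top2_le_of_forall_ne hr.1 i fun j hj => (hv j hj).trans_le har
  rw [spaRevenue, htop1, if_pos hr.2, max_eq_right htop2]

lemma pi_twoPoint_pi_singleton (ha : a ≠ 1) :
    Measure.pi (fun _ : Fin n => twoPoint p a) (univ.pi fun _ => {a})
      = ENNReal.ofReal (1 - p) ^ n := by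
  rw [Measure.pi_pi, Finset.prod_const, Finset.card_univ, Fintype.card_fin,
    twoPoint_singleton ha]

lemma pi_twoPoint_iUnion (ha : a ≠ 1) :
    Measure.pi (fun _ : Fin n => twoPoint p a)
        (⋃ i, univ.pi fun j => if j = i then {1} else {a})
      = n * (ENNReal.ofReal p * ENNReal.ofReal (1 - p) ^ (n - 1)) := by
  have hdisj : Pairwise (Function.onFun Disjoint
      fun i : Fin n => univ.pi fun j => if j = i then ({1} : Set ℝ) else {a}) :=
    fun i j hij => Set.disjoint_left.2 fun v hi hj => by
      have h1 : v i = 1 := by simpa using hi i trivial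
      have h2 : v i = a := by simpa [hij] using hj i trivial
      exact ha (h2.symm.trans h1)
  rw [measure_iUnion hdisj fun i => .univ_pi fun j => by
      split_ifs <;> exact measurableSet_singleton _,
    tsum_fintype, Finset.sum_congr rfl fun i _ => pi_univ_ite _ i _ _, Finset.sum_const,
    Finset.card_univ, Fintype.card_fin, twoPoint_singleton_one ha, twoPoint_singleton ha,
    nsmul_eq_mul]

theorem le_regret_twoPoint [NeZero n] (hr : r ∈ Icc 0 1) (ha : a ∈ Ico 0 1) (har : a ≤ r)
    (hp : p ∈ Icc 0 1) :
    (a - if r ≤ a then r else 0) * (1 - p) ^ n + (1 - r) * (n * p * (1 - p) ^ (n - 1))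
      ≤ regret n r (twoPoint p a) := by
  set G := Measure.pi fun _ : Fin n => twoPoint p a
  set f : (Fin n → ℝ) → ℝ := fun v => top1 v - spaRevenue r v
  set E0 : Set (Fin n → ℝ) := univ.pi fun _ => {a}
  set E1 : Set (Fin n → ℝ) := ⋃ i, univ.pi fun j => if j = i then {1} else {a}
  have hE0m : MeasurableSet E0 := .univ_pi fun _ => measurableSet_singleton a
  have hE1m : MeasurableSet E1 := .iUnion fun i => .univ_pi fun j => by
    split_ifs <;> exact measurableSet_singleton _
  have hE0 : EqOn f (fun _ => a - if r ≤ a then r else 0) E0 := fun v hv => by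
    obtain rfl : v = fun _ => a := funext fun j => hv j trivial
    exact top1_sub_spaRevenue_const ha.1 har
  have hE1 : EqOn f (fun _ => 1 - r) E1 := fun v hv => by
    obtain ⟨i, hi⟩ := mem_iUnion.1 hv
    refine top1_sub_spaRevenue_of_forall_ne hr har (i := i) (by simpa using hi i trivial)
      fun j hj => by simpa [hj] using hi j trivial
  have hdisj : Disjoint E0 E1 := Set.disjoint_left.2 fun v h0 hv => by
    obtain ⟨i, hi⟩ := mem_iUnion.1 hv
    have h1 : v i = 1 := by simpa using hi i trivial
    exact ha.2.ne ((h0 i trivial).symm.trans h1)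
  have hsub : E0 ∪ E1 ⊆ Icc 0 1 := by
    have h1 : ({1} : Set ℝ) ⊆ Icc 0 1 := by simp
    have ha' : ({a} : Set ℝ) ⊆ Icc 0 1 := singleton_subset_iff.2 ⟨ha.1, ha.2.le⟩
    rw [← pi_univ_Icc]
    exact union_subset (pi_mono fun _ _ => ha')
      (iUnion_subset fun i => pi_mono fun j _ => by split_ifs; exacts [h1, ha'])
  have hint := integrableOn_top1_sub_spaRevenue (r := r) G
  calc _ = ∫ v in E0, f v ∂G + ∫ v in E1, f v ∂G := by
        rw [setIntegral_congr_fun hE0m hE0, setIntegral_congr_fun hE1m hE1, setIntegral_const,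
          setIntegral_const, measureReal_def, measureReal_def, pi_twoPoint_pi_singleton ha.2.ne,
          pi_twoPoint_iUnion ha.2.ne, ENNReal.toReal_mul, ENNReal.toReal_mul,
          ENNReal.toReal_natCast, ENNReal.toReal_pow, ENNReal.toReal_pow,
          ENNReal.toReal_ofReal hp.1, ENNReal.toReal_ofReal (sub_nonneg.2 hp.2)]
        simp only [smul_eq_mul]
        ring
    _ = ∫ v in E0 ∪ E1, f v ∂G :=
        (setIntegral_union hdisj hE1m (hint.mono_set (subset_union_left.trans hsub))
          (hint.mono_set (subset_union_right.trans hsub))).symm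
    _ ≤ regret n r (twoPoint p a) := by
        refine setIntegral_mono_set hint ?_ hsub.eventuallyLE
        filter_upwards [ae_restrict_mem measurableSet_Icc] with v hv
        exact sub_nonneg.2 (spaRevenue_le_top1 (top1_mem_Icc hv).1)

end LowerBound

section Supremum

variable {n : ℕ} {r : ℝ}

lemma exists_lt_sub_ite (hr : r ∈ Icc 0 1) {δ : ℝ} (hδ : 0 < δ) :
    ∃ a ∈ Ico (0 : ℝ) 1, a ≤ r ∧ r - δ < a - if r ≤ a then r else 0 := by
  rcases hr.1.eq_or_lt with rfl | hr0
  · exact ⟨0, ⟨le_rfl, one_pos⟩, le_rfl, by simpa using hδ⟩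
  have hlt : max 0 (r - δ / 2) < r := max_lt hr0 (by linarith)
  refine ⟨max 0 (r - δ / 2), ⟨le_max_left _ _, hlt.trans_le hr.2⟩, hlt.le, ?_⟩
  rw [if_neg (not_le.2 hlt)]
  linarith [le_max_right 0 (r - δ / 2)]

theorem exists_lt_regret [NeZero n] (hr : r ∈ Icc 0 1) {p w : ℝ} (hp : p ∈ Icc 0 1)
    (hw : w < twoPointRegret n r p) :
    ∃ F : Measure ℝ, IsProbabilityMeasure F ∧ F (Icc 0 1) = 1 ∧ w < regret n r F := by
  obtain ⟨a, ha, har, hgap⟩ := exists_lt_sub_ite hr (sub_pos.2 hw)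
  refine ⟨twoPoint p a, isProbabilityMeasure_twoPoint hp, twoPoint_Icc hp ⟨ha.1, ha.2.le⟩,
    lt_of_lt_of_le ?_ (le_regret_twoPoint hr ha har hp)⟩
  have hq : (1 - p) ^ n ≤ 1 := pow_le_one₀ (sub_nonneg.2 hp.2) (by linarith [hp.1])
  have hg : (a - if r ≤ a then r else 0) ≤ r := by split_ifs <;> linarith [hr.1]
  unfold twoPointRegret at hgap
  nlinarith [mul_le_mul_of_nonneg_left hq (sub_nonneg.2 hg)]

theorem Wfun_eq_of_regret_le [NeZero n] (hr : r ∈ Icc 0 1) {b p : ℝ} (hp : p ∈ Icc 0 1)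
    (hle : ∀ (F : Measure ℝ) [IsProbabilityMeasure F], regret n r F ≤ b)
    (hb : twoPointRegret n r p = b) : Wfun n r = b := by
  obtain ⟨F, hF, hF1, -⟩ := exists_lt_regret hr hp (w := b - 1) (by linarith)
  rw [Wfun_eq_sSup_regret]
  refine csSup_eq_of_forall_le_of_forall_lt_exists_gt ⟨_, F, hF, hF1, rfl⟩ ?_ fun w hw => ?_
  · rintro _ ⟨F, hF, -, rfl⟩
    exact hle F
  · obtain ⟨F, hF, hF1, hlt⟩ := exists_lt_regret hr hp (hb ▸ hw)
    exact ⟨_, ⟨F, hF, hF1, rfl⟩, hlt⟩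

end Supremum

/-- `W₁(r) = max(1-r, r)`, and for `n ≥ 2`,
`Wₙ(r) = (1-r)^n (n-1)^{n-1} / ((1-r)n - r)^{n-1}` if `r ≤ 1/2` and `Wₙ(r) = r` if
`r ≥ 1/2`. -/
theorem stmt17 (r : ℝ) (hr : r ∈ Set.Icc (0:ℝ) 1) :
    Wfun 1 r = max (1 - r) r ∧
    ∀ n : ℕ, 2 ≤ n →
      (r ≤ 1 / 2 →
        Wfun n r = (1 - r) ^ n * ((n : ℝ) - 1) ^ (n - 1) / ((1 - r) * n - r) ^ (n - 1)) ∧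
      (1 / 2 ≤ r → Wfun n r = r) := by
  have hmax (n : ℕ) [NeZero n] (F : Measure ℝ) [IsProbabilityMeasure F] :
      regret n r F ≤ max (1 - r) r :=
    setIntegral_top1_sub_spaRevenue_le _
  refine ⟨?_, fun n hn => ?_⟩
  · rcases le_total r (1 / 2) with h | h
    · refine Wfun_eq_of_regret_le hr (p := 1) ⟨zero_le_one, le_rfl⟩ (hmax 1) ?_
      simp [twoPointRegret, max_eq_left (by linarith : r ≤ 1 - r)]
    · refine Wfun_eq_of_regret_le hr (p := 0) ⟨le_rfl, zero_le_one⟩ (hmax 1) ?_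
      simp [twoPointRegret, max_eq_right (by linarith : 1 - r ≤ r)]
  have : NeZero n := ⟨by omega⟩
  refine ⟨fun hr2 => ?_, fun hr2 => ?_⟩
  · have hn' : (2 : ℝ) ≤ n := by exact_mod_cast hn
    have hD : 0 < (1 - r) * n - r := by nlinarith
    exact Wfun_eq_of_regret_le hr
      ⟨div_nonneg (by linarith) hD.le, (div_le_one hD).2 (by nlinarith)⟩
      (fun F _ => regret_le_reserveBound F hn hr.1 hD) (twoPointRegret_optimal (by omega) hD.ne')
  · exact Wfun_eq_of_regret_le hr (p := 0) ⟨le_rfl, zero_le_one⟩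
      (fun F _ => (hmax n F).trans_eq (max_eq_right (by linarith))) (by simp [twoPointRegret])
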